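/- Ideal per-block leakage bound: For every power of 2 n and every k ∈ {1,2} (k̄ the other index), the mutual information between the secured index positions and the eavesdropper's observations under the true i.i.d. source distribution satisfies I( A[H^{(n)}_{V|Z}], T_{(k)}[H^{(n)}_{U_k|VZ}], T_{(k̄)}[H^{(n)}_{U_k̄|V U_k Z}] ; Z^n ) ≤ 3 n δ_n. -/
import Mathlib


open scoped BigOperators

noncomputable section

namespace WTpaper

/-- A probability mass function on a finite type. -/
def IsPMF {Ω : Type*} [Fintype Ω] (μ : Ω → ℝ) : Prop :=
  (∀ ω, 0 ≤ μ ω) ∧ ∑ ω, μ ω = 1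

/-- `Finset.filter` over the whole type, with classical decidability. -/
def cfilter {α : Type*} [Fintype α] (p : α → Prop) : Finset α :=
  @Finset.filter α p (Classical.decPred p) Finset.univ

/-- Probability of an event. -/
def prob {Ω : Type*} [Fintype Ω] (μ : Ω → ℝ) (p : Ω → Prop) : ℝ :=
  ∑ ω ∈ cfilter p, μ ω

/-- Probability that a random variable takes a given value. -/
def probOf {Ω α : Type*} [Fintype Ω] (μ : Ω → ℝ) (X : Ω → α) (x : α) : ℝ :=
  prob μ (fun ω => X ω = x)

/-- Shannon entropy (in bits) of a random variable on a finite probability space. -/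
def ent {Ω α : Type*} [Fintype Ω] [Fintype α] (μ : Ω → ℝ) (X : Ω → α) : ℝ :=
  -∑ x : α, probOf μ X x * Real.logb 2 (probOf μ X x)

/-- Conditional Shannon entropy `H(X | Y)` (in bits). -/
def condEnt {Ω α β : Type*} [Fintype Ω] [Fintype α] [Fintype β]
    (μ : Ω → ℝ) (X : Ω → α) (Y : Ω → β) : ℝ :=
  ent μ (fun ω => (X ω, Y ω)) - ent μ Y

/-- Mutual information `I(X ; Y)` (in bits). -/
def mutInfo {Ω α β : Type*} [Fintype Ω] [Fintype α] [Fintype β]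
    (μ : Ω → ℝ) (X : Ω → α) (Y : Ω → β) : ℝ :=
  ent μ X + ent μ Y - ent μ (fun ω => (X ω, Y ω))

/-- Conditional mutual information `I(X ; Y | Z)` (in bits). -/
def condMutInfo {Ω α β γ : Type*} [Fintype Ω] [Fintype α] [Fintype β] [Fintype γ]
    (μ : Ω → ℝ) (X : Ω → α) (Y : Ω → β) (Z : Ω → γ) : ℝ :=
  condEnt μ X Z - condEnt μ X (fun ω => (Y ω, Z ω))

/-- The Markov chain `A − B − C`: `P(A,B,C) P(B) = P(A,B) P(B,C)`. -/
def MarkovChain {Ω α β γ : Type*} [Fintype Ω] (μ : Ω → ℝ)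
    (A : Ω → α) (B : Ω → β) (C : Ω → γ) : Prop :=
  ∀ a b c,
    probOf μ (fun ω => (A ω, B ω, C ω)) (a, b, c) * probOf μ B b =
      probOf μ (fun ω => (A ω, B ω)) (a, b) * probOf μ (fun ω => (B ω, C ω)) (b, c)

section Basic
variable {Ω α β γ : Type*} [Fintype Ω] {μ : Ω → ℝ}

lemma mem_cfilter [Fintype α] {p : α → Prop} {x : α} : x ∈ cfilter p ↔ p x := by
  classical
  simp [cfilter, Finset.filter_congr_decidable]

lemma prob_nonneg (h : ∀ ω, 0 ≤ μ ω) (p : Ω → Prop) : 0 ≤ prob μ p :=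
  Finset.sum_nonneg fun ω _ => h ω

lemma prob_mono (h : ∀ ω, 0 ≤ μ ω) {p q : Ω → Prop} (hpq : ∀ ω, p ω → q ω) :
    prob μ p ≤ prob μ q := by
  apply Finset.sum_le_sum_of_subset_of_nonneg
  · intro ω hw; rw [mem_cfilter] at *; exact hpq ω hw
  · intro ω _ _; exact h ω

lemma prob_le_one (hμ : IsPMF μ) (p : Ω → Prop) : prob μ p ≤ 1 := by
  calc prob μ p ≤ prob μ (fun _ => True) := prob_mono hμ.1 (fun ω _ => trivial)
  _ = 1 := by
      rw [← hμ.2]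
      apply Finset.sum_congr _ (fun _ _ => rfl)
      ext ω; simp [mem_cfilter]

lemma probOf_nonneg (h : ∀ ω, 0 ≤ μ ω) (X : Ω → α) (x : α) : 0 ≤ probOf μ X x :=
  prob_nonneg h _

lemma probOf_le_one (hμ : IsPMF μ) (X : Ω → α) (x : α) : probOf μ X x ≤ 1 :=
  prob_le_one hμ _

/-- joint ≤ marginal / data-processing for point probabilities -/
lemma probOf_le_comp (h : ∀ ω, 0 ≤ μ ω) (X : Ω → α) (f : α → β) (x : α) :
    probOf μ X x ≤ probOf μ (fun ω => f (X ω)) (f x) :=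
  prob_mono h fun ω hw => congrArg f hw

/-- fiberwise decomposition of a sum -/
lemma sum_fiber (X : Ω → α) [Fintype α] (f : Ω → ℝ) :
    ∑ x : α, ∑ ω ∈ cfilter (fun ω => X ω = x), f ω = ∑ ω, f ω := by
  classical
  have := Finset.sum_fiberwise_of_maps_to (s := Finset.univ) (t := Finset.univ)
    (g := X) (fun i _ => Finset.mem_univ (X i)) f
  rw [← this]
  apply Finset.sum_congr rfl
  intro x _
  apply Finset.sum_congr _ (fun _ _ => rfl)
  simp [cfilter, Finset.filter_congr_decidable]

lemma sum_probOf [Fintype α] (hμ : IsPMF μ) (X : Ω → α) : ∑ x : α, probOf μ X x = 1 := by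
  rw [← hμ.2]; exact sum_fiber X μ

/-- marginalization identity -/
lemma probOf_comp [Fintype α] (X : Ω → α) (f : α → β) (y : β) :
    probOf μ (fun ω => f (X ω)) y = ∑ x ∈ cfilter (fun x : α => f x = y), probOf μ X x := by
  classical
  have h := Finset.sum_fiberwise_of_maps_to (s := cfilter (fun ω => f (X ω) = y))
    (t := cfilter (fun x : α => f x = y)) (g := X)
    (fun ω hω => by rw [mem_cfilter] at *; exact hω) μ
  unfold probOf prob
  rw [← h]
  apply Finset.sum_congr rfl
  intro x hx
  rw [mem_cfilter] at hx
  apply Finset.sum_congr _ (fun _ _ => rfl)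
  ext ω
  classical
  simp only [cfilter, Finset.filter_congr_decidable, Finset.mem_filter, Finset.mem_univ,
    true_and]
  constructor
  · rintro ⟨_, h2⟩; exact h2
  · intro h2; exact ⟨by rw [h2, hx], h2⟩

/-- marginalization with a weight depending on the pushforward value -/
lemma sum_probOf_comp [Fintype α] [Fintype β] (X : Ω → α) (f : α → β) (c : β → ℝ) :
    ∑ x : α, probOf μ X x * c (f x) = ∑ y : β, probOf μ (fun ω => f (X ω)) y * c y := by
  classical
  rw [← sum_fiber (Ω := α) (α := β) f (fun x => probOf μ X x * c (f x))]
  apply Finset.sum_congr rfl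
  intro y _
  rw [probOf_comp X f y, Finset.sum_mul]
  apply Finset.sum_congr rfl
  intro x hx
  rw [mem_cfilter] at hx
  rw [hx]

end Basic

section Ent
variable {Ω α β γ : Type*} [Fintype Ω] {μ : Ω → ℝ}

/-- Gibbs' inequality. -/
lemma gibbs [Fintype α] (p q : α → ℝ) (hp : ∀ x, 0 ≤ p x) (hq : ∀ x, 0 ≤ q x)
    (hp1 : ∑ x, p x = 1) (hq1 : ∑ x, q x ≤ 1) (habs : ∀ x, q x = 0 → p x = 0) :
    -∑ x, p x * Real.logb 2 (p x) ≤ -∑ x, p x * Real.logb 2 (q x) := by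
  rw [neg_le_neg_iff]
  have key : ∀ x, p x * Real.logb 2 (q x) - p x * Real.logb 2 (p x)
      ≤ (q x - p x) / Real.log 2 := by
    intro x
    rcases eq_or_lt_of_le (hp x) with h0 | h0
    · rw [← h0]
      simp only [zero_mul, sub_zero, sub_self]
      have hlog2 : (0:ℝ) < Real.log 2 := Real.log_pos (by norm_num)
      exact div_nonneg (hq x) hlog2.le
    · have hqx : 0 < q x := by
        rcases eq_or_lt_of_le (hq x) with h1 | h1
        · exfalso; have := habs x h1.symm; linarith
        · exact h1
      have hlog2 : (0:ℝ) < Real.log 2 := Real.log_pos (by norm_num)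
      rw [← mul_sub, ← Real.logb_div (ne_of_gt hqx) (ne_of_gt h0)]
      have h2 : Real.logb 2 (q x / p x) ≤ (q x / p x - 1) / Real.log 2 := by
        rw [Real.logb, div_le_div_iff_of_pos_right hlog2]
        exact Real.log_le_sub_one_of_pos (div_pos hqx h0)
      calc p x * Real.logb 2 (q x / p x) ≤ p x * ((q x / p x - 1) / Real.log 2) := by
            exact mul_le_mul_of_nonneg_left h2 (le_of_lt h0)
      _ = (q x - p x) / Real.log 2 := by
            field_simp
  calc ∑ x, p x * Real.logb 2 (q x)
      ≤ ∑ x, (p x * Real.logb 2 (p x) + (q x - p x) / Real.log 2) := by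
        apply Finset.sum_le_sum; intro x _; linarith [key x]
  _ = ∑ x, p x * Real.logb 2 (p x) + (∑ x, q x - 1) / Real.log 2 := by
        rw [Finset.sum_add_distrib, ← Finset.sum_div]
        congr 2
        rw [Finset.sum_sub_distrib, hp1]
  _ ≤ ∑ x, p x * Real.logb 2 (p x) := by
        have hlog2 : (0:ℝ) < Real.log 2 := Real.log_pos (by norm_num)
        have : (∑ x, q x - 1) / Real.log 2 ≤ 0 :=
          div_nonpos_of_nonpos_of_nonneg (by linarith) (le_of_lt hlog2)
        linarith

lemma ent_nonneg [Fintype α] (hμ : IsPMF μ) (X : Ω → α) : 0 ≤ ent μ X := by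
  unfold ent
  rw [← neg_zero, neg_le_neg_iff]  -- goal: sum ≤ 0
  apply Finset.sum_nonpos
  intro x _
  apply mul_nonpos_of_nonneg_of_nonpos (probOf_nonneg hμ.1 X x)
  exact Real.logb_nonpos (by norm_num) (probOf_nonneg hμ.1 X x) (probOf_le_one hμ X x)

lemma ent_le_logb_card [Fintype α] [Nonempty α] (hμ : IsPMF μ) (X : Ω → α) :
    ent μ X ≤ Real.logb 2 (Fintype.card α) := by
  have hcard : (0:ℝ) < (Fintype.card α : ℝ) := by
    have := Fintype.card_pos (α := α); positivity
  have h := gibbs (probOf μ X) (fun _ => (Fintype.card α : ℝ)⁻¹)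
    (probOf_nonneg hμ.1 X) (fun _ => by positivity) (sum_probOf hμ X)
    (by rw [Finset.sum_const, nsmul_eq_mul, Finset.card_univ, mul_inv_cancel₀ (ne_of_gt hcard)])
    (fun x hx => absurd hx (by positivity))
  unfold ent
  calc -∑ x, probOf μ X x * Real.logb 2 (probOf μ X x)
      ≤ -∑ x, probOf μ X x * Real.logb 2 (Fintype.card α : ℝ)⁻¹ := h
  _ = Real.logb 2 (Fintype.card α) := by
      rw [← Finset.sum_mul, sum_probOf hμ X, one_mul, Real.logb_inv, neg_neg]

/-- Data processing for entropy. -/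
lemma ent_comp_le [Fintype α] [Fintype β] (hμ : IsPMF μ) (X : Ω → α) (f : α → β) :
    ent μ (fun ω => f (X ω)) ≤ ent μ X := by
  unfold ent
  rw [← sum_probOf_comp (μ := μ) X f (fun y => Real.logb 2 (probOf μ (fun ω => f (X ω)) y)),
    neg_le_neg_iff]
  apply Finset.sum_le_sum
  intro x _
  rcases eq_or_lt_of_le (probOf_nonneg hμ.1 X x) with h0 | h0
  · rw [← h0]; simp
  · apply mul_le_mul_of_nonneg_left _ (le_of_lt h0)
    apply Real.logb_le_logb_of_le (by norm_num) h0
    exact probOf_le_comp hμ.1 X f x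

/-- Entropy is preserved by mutually-determining reparametrizations. -/
lemma ent_congr [Fintype α] [Fintype β] (hμ : IsPMF μ) {X : Ω → α} {Y : Ω → β}
    (f : α → β) (g : β → α) (hf : ∀ ω, f (X ω) = Y ω) (hg : ∀ ω, g (Y ω) = X ω) :
    ent μ X = ent μ Y := by
  apply le_antisymm
  · have h := ent_comp_le hμ Y g
    have e : (fun ω => g (Y ω)) = X := funext hg
    rw [e] at h; exact h
  · have h := ent_comp_le hμ X f
    have e : (fun ω => f (X ω)) = Y := funext hf
    rw [e] at h; exact h

end Ent

section Sub
variable {Ω α β γ : Type*} [Fintype Ω] {μ : Ω → ℝ}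

lemma prob_congr {p q : Ω → Prop} (h : ∀ ω, p ω ↔ q ω) : prob μ p = prob μ q := by
  have : p = q := funext fun ω => propext (h ω)
  rw [this]

lemma sum_fiber' [Fintype α] (X : Ω → α) (pr : Ω → Prop) (f : Ω → ℝ) :
    ∑ x : α, ∑ ω ∈ cfilter (fun ω => X ω = x ∧ pr ω), f ω = ∑ ω ∈ cfilter pr, f ω := by
  classical
  have h := Finset.sum_fiberwise_of_maps_to (s := cfilter pr) (t := (Finset.univ : Finset α))
    (g := X) (fun i _ => Finset.mem_univ _) f
  rw [← h]
  apply Finset.sum_congr rfl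
  intro x _
  apply Finset.sum_congr _ (fun _ _ => rfl)
  ext ω
  simp only [cfilter, Finset.filter_congr_decidable, Finset.mem_filter, Finset.mem_univ, true_and]
  tauto

lemma marg_fst [Fintype α] [Fintype γ] (X : Ω → α) (Z : Ω → γ) (z : γ) :
    ∑ x : α, probOf μ (fun ω => (X ω, Z ω)) (x, z) = probOf μ Z z := by
  have e : ∀ x, probOf μ (fun ω => (X ω, Z ω)) (x, z)
      = ∑ ω ∈ cfilter (fun ω => X ω = x ∧ Z ω = z), μ ω := by
    intro x
    unfold probOf
    rw [prob_congr (q := fun ω => X ω = x ∧ Z ω = z) (fun ω => by rw [Prod.mk.injEq])]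
    rfl
  rw [Finset.sum_congr rfl (fun x _ => e x)]
  exact sum_fiber' X (fun ω => Z ω = z) μ

/-- Submodularity: conditioning reduces entropy, `H(X | Y, Z) ≤ H(X | Z)`. -/
lemma condEnt_pair_le [Fintype α] [Fintype β] [Fintype γ] (hμ : IsPMF μ)
    (X : Ω → α) (Y : Ω → β) (Z : Ω → γ) :
    condEnt μ X (fun ω => (Y ω, Z ω)) ≤ condEnt μ X Z := by
  classical
  have hμ0 := hμ.1
  set T : Ω → α × β × γ := fun ω => (X ω, Y ω, Z ω) with hT
  set p : α × β × γ → ℝ := probOf μ T with hp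
  set pXZ : α × γ → ℝ := probOf μ (fun ω => (X ω, Z ω)) with hpXZ
  set pYZ : β × γ → ℝ := probOf μ (fun ω => (Y ω, Z ω)) with hpYZ
  set pZ : γ → ℝ := probOf μ Z with hpZ
  set q : α × β × γ → ℝ := fun w => pXZ (w.1, w.2.2) * pYZ w.2 / pZ w.2.2 with hq
  have hp0 : ∀ w, 0 ≤ p w := probOf_nonneg hμ0 T
  have hXZ0 : ∀ v, 0 ≤ pXZ v := probOf_nonneg hμ0 _
  have hYZ0 : ∀ v, 0 ≤ pYZ v := probOf_nonneg hμ0 _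
  have hZ0 : ∀ v, 0 ≤ pZ v := probOf_nonneg hμ0 _
  have hle1 : ∀ w, p w ≤ pXZ (w.1, w.2.2) :=
    fun w => probOf_le_comp hμ0 T (fun w : α × β × γ => (w.1, w.2.2)) w
  have hle2 : ∀ w, p w ≤ pYZ w.2 :=
    fun w => probOf_le_comp hμ0 T (fun w : α × β × γ => w.2) w
  have hle3 : ∀ w, p w ≤ pZ w.2.2 :=
    fun w => probOf_le_comp hμ0 T (fun w : α × β × γ => w.2.2) w
  have hmargX : ∀ z, ∑ x, pXZ (x, z) = pZ z := fun z => marg_fst X Z z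
  have hmargY : ∀ z, ∑ y, pYZ (y, z) = pZ z := fun z => marg_fst Y Z z
  -- sum of q is at most 1
  have hq1 : ∑ w, q w ≤ 1 := by
    have e1 : ∑ w : α × β × γ, q w
        = ∑ z : γ, ∑ x : α, ∑ y : β, pXZ (x, z) * pYZ (y, z) / pZ z := by
      rw [Fintype.sum_prod_type]
      have inner : ∀ x : α, ∑ v : β × γ, q (x, v)
          = ∑ z : γ, ∑ y : β, pXZ (x, z) * pYZ (y, z) / pZ z := by
        intro x
        rw [Fintype.sum_prod_type]
        rw [Finset.sum_comm]
      rw [Finset.sum_congr rfl (fun x _ => inner x)]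
      rw [Finset.sum_comm]
    have e2 : ∀ z : γ, ∑ x : α, ∑ y : β, pXZ (x, z) * pYZ (y, z) / pZ z
        = pZ z * pZ z / pZ z := by
      intro z
      have factored : (∑ x, pXZ (x, z)) * (∑ y, pYZ (y, z)) / pZ z
          = ∑ x : α, ∑ y : β, pXZ (x, z) * pYZ (y, z) / pZ z := by
        rw [Finset.sum_mul_sum, Finset.sum_div]
        exact Finset.sum_congr rfl (fun x _ => Finset.sum_div _ _ _)
      rw [← factored, hmargX z, hmargY z]
    rw [e1, Finset.sum_congr rfl (fun z _ => e2 z)]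
    have e3 : ∀ z : γ, pZ z * pZ z / pZ z ≤ pZ z := by
      intro z
      rcases eq_or_lt_of_le (hZ0 z) with h0 | h0
      · rw [← h0]; simp
      · rw [mul_div_assoc, div_self (ne_of_gt h0), mul_one]
    calc ∑ z, pZ z * pZ z / pZ z ≤ ∑ z, pZ z := Finset.sum_le_sum (fun z _ => e3 z)
    _ = 1 := sum_probOf hμ Z
  have habs : ∀ w, q w = 0 → p w = 0 := by
    intro w hw
    rw [hq] at hw
    rcases div_eq_zero_iff.mp hw with h | h
    · rcases mul_eq_zero.mp h with h | h
      · exact le_antisymm (h ▸ hle1 w) (hp0 w)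
      · exact le_antisymm (h ▸ hle2 w) (hp0 w)
    · exact le_antisymm (h ▸ hle3 w) (hp0 w)
  have hq0 : ∀ w, 0 ≤ q w := fun w =>
    div_nonneg (mul_nonneg (hXZ0 _) (hYZ0 _)) (hZ0 _)
  have hgibbs : ent μ T ≤ -∑ w, p w * Real.logb 2 (q w) :=
    gibbs p q hp0 hq0 (sum_probOf hμ T) hq1 habs
  -- split the logarithm
  have hsplit : ∑ w, p w * Real.logb 2 (q w)
      = ∑ w, p w * (Real.logb 2 (pXZ (w.1, w.2.2)) + Real.logb 2 (pYZ w.2)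
          - Real.logb 2 (pZ w.2.2)) := by
    apply Finset.sum_congr rfl
    intro w _
    rcases eq_or_lt_of_le (hp0 w) with h0 | h0
    · rw [← h0, zero_mul, zero_mul]
    · have h1 : 0 < pXZ (w.1, w.2.2) := lt_of_lt_of_le h0 (hle1 w)
      have h2 : 0 < pYZ w.2 := lt_of_lt_of_le h0 (hle2 w)
      have h3 : 0 < pZ w.2.2 := lt_of_lt_of_le h0 (hle3 w)
      congr 1
      rw [hq]
      rw [Real.logb_div (by positivity) (ne_of_gt h3),
        Real.logb_mul (ne_of_gt h1) (ne_of_gt h2)]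
  have e1 : ∑ w, p w * Real.logb 2 (pXZ (w.1, w.2.2))
      = ∑ v : α × γ, pXZ v * Real.logb 2 (pXZ v) :=
    sum_probOf_comp T (fun w : α × β × γ => (w.1, w.2.2)) (fun v => Real.logb 2 (pXZ v))
  have e2 : ∑ w, p w * Real.logb 2 (pYZ w.2)
      = ∑ v : β × γ, pYZ v * Real.logb 2 (pYZ v) :=
    sum_probOf_comp T (fun w : α × β × γ => w.2) (fun v => Real.logb 2 (pYZ v))
  have e3 : ∑ w, p w * Real.logb 2 (pZ w.2.2)
      = ∑ v : γ, pZ v * Real.logb 2 (pZ v) :=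
    sum_probOf_comp T (fun w : α × β × γ => w.2.2) (fun v => Real.logb 2 (pZ v))
  have key : ent μ T ≤ ent μ (fun ω => (X ω, Z ω)) + ent μ (fun ω => (Y ω, Z ω)) - ent μ Z := by
    calc ent μ T ≤ -∑ w, p w * Real.logb 2 (q w) := hgibbs
    _ = -∑ w, (p w * Real.logb 2 (pXZ (w.1, w.2.2)) + p w * Real.logb 2 (pYZ w.2)
          - p w * Real.logb 2 (pZ w.2.2)) := by
        rw [hsplit]; congr 1; apply Finset.sum_congr rfl; intro w _; ring
    _ = -(∑ w, p w * Real.logb 2 (pXZ (w.1, w.2.2))) - (∑ w, p w * Real.logb 2 (pYZ w.2))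
          + (∑ w, p w * Real.logb 2 (pZ w.2.2)) := by
        rw [Finset.sum_sub_distrib, Finset.sum_add_distrib]; ring
    _ = ent μ (fun ω => (X ω, Z ω)) + ent μ (fun ω => (Y ω, Z ω)) - ent μ Z := by
        rw [e1, e2, e3]
        unfold ent
        rw [hpXZ, hpYZ, hpZ]
        ring
  have hTent : ent μ T = ent μ (fun ω => (X ω, (Y ω, Z ω))) := rfl
  unfold condEnt
  rw [← hTent]
  linarith [key]

end Sub

section CondStruct
variable {Ω α α' β β' γ : Type*} [Fintype Ω] {μ : Ω → ℝ}

lemma ent_unit (hμ : IsPMF μ) : ent μ (fun _ : Ω => ()) = 0 := by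
  unfold ent
  rw [Fintype.sum_unique]
  have : probOf μ (fun _ : Ω => ()) () = 1 := by
    unfold probOf
    rw [prob_congr (q := fun _ => True) (fun ω => by simp)]
    unfold prob
    rw [← hμ.2]
    apply Finset.sum_congr _ (fun _ _ => rfl)
    ext ω; simp [mem_cfilter]
  rw [this]
  simp

lemma condEnt_congr_right [Fintype α] [Fintype β] [Fintype β'] (hμ : IsPMF μ)
    (X : Ω → α) {Y : Ω → β} {Y' : Ω → β'} (f : β → β') (g : β' → β)
    (hf : ∀ ω, f (Y ω) = Y' ω) (hg : ∀ ω, g (Y' ω) = Y ω) :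
    condEnt μ X Y = condEnt μ X Y' := by
  unfold condEnt
  rw [ent_congr hμ f g hf hg,
    ent_congr hμ (fun v : α × β => (v.1, f v.2)) (fun v : α × β' => (v.1, g v.2))
      (X := fun ω => (X ω, Y ω)) (Y := fun ω => (X ω, Y' ω))
      (fun ω => by simp [hf ω]) (fun ω => by simp [hg ω])]

lemma condEnt_congr_left [Fintype α] [Fintype α'] [Fintype β] (hμ : IsPMF μ)
    {X : Ω → α} {X' : Ω → α'} (Y : Ω → β) (f : α → α') (g : α' → α)
    (hf : ∀ ω, f (X ω) = X' ω) (hg : ∀ ω, g (X' ω) = X ω) :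
    condEnt μ X Y = condEnt μ X' Y := by
  unfold condEnt
  rw [ent_congr hμ (fun v : α × β => (f v.1, v.2)) (fun v : α' × β => (g v.1, v.2))
      (X := fun ω => (X ω, Y ω)) (Y := fun ω => (X' ω, Y ω))
      (fun ω => by simp [hf ω]) (fun ω => by simp [hg ω])]

lemma condEnt_nonneg [Fintype α] [Fintype β] (hμ : IsPMF μ) (X : Ω → α) (Y : Ω → β) :
    0 ≤ condEnt μ X Y := by
  have h := ent_comp_le hμ (fun ω => (X ω, Y ω)) Prod.snd
  unfold condEnt
  have e : ent μ (fun ω => Prod.snd ((X ω, Y ω))) = ent μ Y := rfl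
  rw [e] at h
  linarith

lemma condEnt_le_ent [Fintype α] [Fintype β] (hμ : IsPMF μ) (X : Ω → α) (Y : Ω → β) :
    condEnt μ X Y ≤ ent μ X := by
  have h1 : condEnt μ X Y = condEnt μ X (fun ω => (Y ω, ())) :=
    condEnt_congr_right hμ X (fun y => (y, ())) Prod.fst
      (fun ω => rfl) (fun ω => rfl)
  have h2 := condEnt_pair_le hμ X Y (fun _ : Ω => ())
  have h3 : condEnt μ X (fun _ : Ω => ()) = ent μ X := by
    unfold condEnt
    rw [ent_unit hμ]
    rw [ent_congr hμ Prod.fst (fun x : α => (x, ()))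
      (X := fun ω => (X ω, ())) (Y := X) (fun ω => rfl) (fun ω => rfl)]
    ring
  rw [h1]
  rw [h3] at h2
  exact h2

/-- Conditioning on a function of `Y` gives more entropy than conditioning on `Y`. -/
lemma condEnt_comp_right_le [Fintype α] [Fintype β] [Fintype β'] (hμ : IsPMF μ)
    (X : Ω → α) (Y : Ω → β) (f : β → β') :
    condEnt μ X Y ≤ condEnt μ X (fun ω => f (Y ω)) := by
  have h1 : condEnt μ X Y = condEnt μ X (fun ω => (Y ω, f (Y ω))) :=
    condEnt_congr_right hμ X (fun y => (y, f y)) Prod.fst (fun ω => rfl) (fun ω => rfl)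
  rw [h1]
  exact condEnt_pair_le hμ X Y (fun ω => f (Y ω))

/-- Chain rule `H(X, Y | Z) = H(Y | Z) + H(X | Y, Z)`. -/
lemma condEnt_chain [Fintype α] [Fintype β] [Fintype γ] (hμ : IsPMF μ)
    (X : Ω → α) (Y : Ω → β) (Z : Ω → γ) :
    condEnt μ (fun ω => (X ω, Y ω)) Z
      = condEnt μ Y Z + condEnt μ X (fun ω => (Y ω, Z ω)) := by
  unfold condEnt
  have e : ent μ (fun ω => ((X ω, Y ω), Z ω)) = ent μ (fun ω => (X ω, (Y ω, Z ω))) :=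
    ent_congr hμ (fun v : (α × β) × γ => (v.1.1, (v.1.2, v.2)))
      (fun v : α × β × γ => ((v.1, v.2.1), v.2.2)) (fun ω => rfl) (fun ω => rfl)
  rw [e]
  ring

/-- Chain rule `H(X, Y) = H(Y) + H(X | Y)`. -/
lemma ent_chain [Fintype α] [Fintype β] (X : Ω → α) (Y : Ω → β) :
    ent μ (fun ω => (X ω, Y ω)) = ent μ Y + condEnt μ X Y := by
  unfold condEnt; ring

end CondStruct


/-- `δ_n = 2^{-n^β}`. -/
def deltaN (β : ℝ) (n : ℕ) : ℝ := (2 : ℝ) ^ (-((n : ℝ) ^ β))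

/-- Arıkan's polarization kernel. -/
def g2 : Matrix (Fin 2) (Fin 2) (ZMod 2) := !![1, 1; 1, 0]

def twoPowEquiv (m : ℕ) : Fin 2 × Fin (2 ^ m) ≃ Fin (2 ^ (m + 1)) :=
  finProdFinEquiv.trans (finCongr (by rw [pow_succ]; exact Nat.mul_comm 2 (2 ^ m)))

/-- The source polarization matrix `G_n = [[1,1],[1,0]]^{⊗ m}`, with `n = 2^m`. -/
def polarG : (m : ℕ) → Matrix (Fin (2 ^ m)) (Fin (2 ^ m)) (ZMod 2)
  | 0 => 1
  | m + 1 =>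
      Matrix.reindex (twoPowEquiv m) (twoPowEquiv m)
        (Matrix.kroneckerMap (· * ·) g2 (polarG m))

/-- The distribution of `n` i.i.d. copies of a source. -/
def iid {Ω : Type*} [Fintype Ω] (μ : Ω → ℝ) (n : ℕ) : (Fin n → Ω) → ℝ :=
  fun ω => ∏ i, μ (ω i)

/-- The polar transform `U^n = X^n G_n` of the `n` i.i.d. copies of `X`. -/
def polarVec {Ω : Type*} (X : Ω → ZMod 2) (m : ℕ) (ω : Fin (2 ^ m) → Ω) :
    Fin (2 ^ m) → ZMod 2 :=
  Matrix.vecMul (fun i => X (ω i)) (polarG m)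

/-- The prefix `U^{1:j-1}` of the polar transform. -/
def prefixVec {Ω : Type*} (X : Ω → ZMod 2) (m : ℕ) (j : Fin (2 ^ m))
    (ω : Fin (2 ^ m) → Ω) : Fin j.1 → ZMod 2 :=
  fun i => polarVec X m ω (Fin.castLE j.2.le i)

/-- `H^{(n)}_{X|S} = { j : H(U(j) | U^{1:j-1}, S^n) ≥ 1 - δ_n }`, where `n = 2^m`. -/
def highSet {Ω σ : Type*} [Fintype Ω] [Fintype σ] (μ : Ω → ℝ) (X : Ω → ZMod 2)
    (S : Ω → σ) (β : ℝ) (m : ℕ) : Finset (Fin (2 ^ m)) :=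
  cfilter fun j =>
    1 - deltaN β (2 ^ m) ≤
      condEnt (iid μ (2 ^ m)) (fun ω => polarVec X m ω j)
        (fun ω => (prefixVec X m j ω, fun i => S (ω i)))

/-- `L^{(n)}_{X|S} = { j : H(U(j) | U^{1:j-1}, S^n) ≤ δ_n }`, where `n = 2^m`. -/
def lowSet {Ω σ : Type*} [Fintype Ω] [Fintype σ] (μ : Ω → ℝ) (X : Ω → ZMod 2)
    (S : Ω → σ) (β : ℝ) (m : ℕ) : Finset (Fin (2 ^ m)) :=
  cfilter fun j =>
    condEnt (iid μ (2 ^ m)) (fun ω => polarVec X m ω j)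
        (fun ω => (prefixVec X m j ω, fun i => S (ω i))) ≤
      deltaN β (2 ^ m)

/-- `H^{(n)}_{X} = { j : H(U(j) | U^{1:j-1}) ≥ 1 - δ_n }` (no side information). -/
def highSet0 {Ω : Type*} [Fintype Ω] (μ : Ω → ℝ) (X : Ω → ZMod 2)
    (β : ℝ) (m : ℕ) : Finset (Fin (2 ^ m)) :=
  cfilter fun j =>
    1 - deltaN β (2 ^ m) ≤
      condEnt (iid μ (2 ^ m)) (fun ω => polarVec X m ω j) (prefixVec X m j)

/-- `L^{(n)}_{X} = { j : H(U(j) | U^{1:j-1}) ≤ δ_n }` (no side information). -/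
def lowSet0 {Ω : Type*} [Fintype Ω] (μ : Ω → ℝ) (X : Ω → ZMod 2)
    (β : ℝ) (m : ℕ) : Finset (Fin (2 ^ m)) :=
  cfilter fun j =>
    condEnt (iid μ (2 ^ m)) (fun ω => polarVec X m ω j) (prefixVec X m j) ≤
      deltaN β (2 ^ m)

/-- The subvector `X[𝒜]`. -/
def restr {n : ℕ} {γ : Type*} (A : Finset (Fin n)) (v : Fin n → γ) :
    {j // j ∈ A} → γ :=
  fun j => v j.1

section ChainVec
variable {Ω γ : Type*} [Fintype Ω] [Fintype γ] {μ : Ω → ℝ}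

/-- Lower bound on the conditional entropy of a secured subvector via the chain rule. -/
lemma condEnt_restr_ge (hμ : IsPMF μ) {N : ℕ} (vec : Ω → Fin N → ZMod 2)
    (C : Ω → γ) (h : ℝ) (A : Finset (Fin N)) :
    (∀ j ∈ A, h ≤ condEnt μ (fun ω => vec ω j)
      (fun ω => ((fun i : Fin j.1 => vec ω (Fin.castLE j.2.le i)), C ω))) →
    (A.card : ℝ) * h ≤ condEnt μ (fun ω => restr A (vec ω)) C := by
  classical
  induction A using Finset.strongInduction with
  | _ A ih =>
    intro hA
    rcases A.eq_empty_or_nonempty with rfl | hne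
    · simpa using condEnt_nonneg hμ (fun ω => restr (∅ : Finset (Fin N)) (vec ω)) C
    · set j := A.max' hne with hjdef
      have hj : j ∈ A := A.max'_mem hne
      set A' := A.erase j with hA'
      have hlt : ∀ i : {i // i ∈ A'}, (i.1 : Fin N).1 < j.1 := by
        intro i
        have h1 : i.1 ∈ A := Finset.mem_of_mem_erase i.2
        have h2 : i.1 ≠ j := (Finset.mem_erase.mp i.2).1
        exact Fin.lt_def.mp (lt_of_le_of_ne (A.le_max' i.1 h1) h2)
      -- split off the top coordinate
      have split1 : condEnt μ (fun ω => restr A (vec ω)) C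
          = condEnt μ (fun ω => (vec ω j, restr A' (vec ω))) C := by
        apply condEnt_congr_left hμ C
          (f := fun s : {i // i ∈ A} → ZMod 2 =>
            (s ⟨j, hj⟩, fun i : {i // i ∈ A'} => s ⟨i.1, Finset.mem_of_mem_erase i.2⟩))
          (g := fun bs : ZMod 2 × ({i // i ∈ A'} → ZMod 2) =>
            fun i : {i // i ∈ A} =>
              if hij : i.1 = j then bs.1 else bs.2 ⟨i.1, Finset.mem_erase.mpr ⟨hij, i.2⟩⟩)
        · intro ω; rfl
        · intro ω
          funext i
          show (if hij : i.1 = j then vec ω j else restr A' (vec ω) _) = restr A (vec ω) i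
          split
          · rename_i hij
            show vec ω j = vec ω i.1
            rw [hij]
          · rfl
      have split2 := condEnt_chain hμ (fun ω => vec ω j) (fun ω => restr A' (vec ω)) C
      -- the conditioning `(restr A' (vec ω), C ω)` is a function of the full prefix
      have hmono : condEnt μ (fun ω => vec ω j)
            (fun ω => ((fun i : Fin j.1 => vec ω (Fin.castLE j.2.le i)), C ω))
          ≤ condEnt μ (fun ω => vec ω j) (fun ω => (restr A' (vec ω), C ω)) := by
        have step := condEnt_comp_right_le hμ (fun ω => vec ω j)
          (Y := fun ω => ((fun i : Fin j.1 => vec ω (Fin.castLE j.2.le i)), C ω))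
          (f := fun pc : (Fin j.1 → ZMod 2) × γ =>
            ((fun i : {i // i ∈ A'} => pc.1 ⟨(i.1 : Fin N).1, hlt i⟩), pc.2))
        have e : (fun ω => ((fun i : {i // i ∈ A'} =>
              vec ω (Fin.castLE j.2.le ⟨(i.1 : Fin N).1, hlt i⟩)), C ω))
            = (fun ω => (restr A' (vec ω), C ω)) := by
          funext ω
          refine congrArg (fun t => (t, C ω)) ?_
          funext i
          show vec ω (Fin.castLE j.2.le ⟨(i.1 : Fin N).1, hlt i⟩) = vec ω i.1
          congr 1
        rw [e] at step
        exact step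
      have IH := ih A' (Finset.erase_ssubset hj)
        (fun j' hj' => hA j' (Finset.mem_of_mem_erase hj'))
      have hAj := hA j hj
      have cardeq : (A.card : ℝ) = (A'.card : ℝ) + 1 := by
        rw [hA']
        rw [← Finset.card_erase_add_one hj]
        push_cast
        ring
      have expand : (A.card : ℝ) * h = (A'.card : ℝ) * h + h := by rw [cardeq]; ring
      rw [split1, split2, expand]
      have hfinal : h ≤ condEnt μ (fun ω => vec ω j) (fun ω => (restr A' (vec ω), C ω)) :=
        le_trans hAj hmono
      linarith

lemma ent_restr_le {N : ℕ} (hμ : IsPMF μ) (A : Finset (Fin N))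
    (X : Ω → ({j // j ∈ A} → ZMod 2)) : ent μ X ≤ (A.card : ℝ) := by
  classical
  have h := ent_le_logb_card hμ X
  have hcard : Fintype.card ({j // j ∈ A} → ZMod 2) = 2 ^ A.card := by
    rw [Fintype.card_fun, ZMod.card 2, Fintype.card_coe]
  rw [hcard] at h
  calc ent μ X ≤ Real.logb 2 ((2 ^ A.card : ℕ) : ℝ) := h
  _ = (A.card : ℝ) := by
      push_cast
      rw [Real.logb_pow, Real.logb_self_eq_one (by norm_num)]
      ring

/-- per-block leakage bound -/
lemma term_bound {γ' : Type*} [Fintype γ'] (hμ : IsPMF μ) {N : ℕ}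
    (vec : Ω → Fin N → ZMod 2) (C : Ω → γ) (A : Finset (Fin N)) (δ : ℝ)
    (hA : ∀ j ∈ A, 1 - δ ≤ condEnt μ (fun ω => vec ω j)
      (fun ω => ((fun i : Fin j.1 => vec ω (Fin.castLE j.2.le i)), C ω)))
    (E : Ω → γ') (F : γ → γ') (hF : ∀ ω, F (C ω) = E ω) :
    ent μ (fun ω => restr A (vec ω)) - condEnt μ (fun ω => restr A (vec ω)) E
      ≤ (A.card : ℝ) * δ := by
  have h1 : ent μ (fun ω => restr A (vec ω)) ≤ (A.card : ℝ) := ent_restr_le hμ A _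
  have h2 : (A.card : ℝ) * (1 - δ) ≤ condEnt μ (fun ω => restr A (vec ω)) C :=
    condEnt_restr_ge hμ vec C (1 - δ) A hA
  have h3 : condEnt μ (fun ω => restr A (vec ω)) C
      ≤ condEnt μ (fun ω => restr A (vec ω)) E := by
    have step := condEnt_comp_right_le hμ (fun ω => restr A (vec ω)) C F
    have e : (fun ω => F (C ω)) = E := funext hF
    rw [e] at step
    exact step
  nlinarith [h1, h2, h3]

end ChainVec

lemma iid_aux {Ω : Type*} [Fintype Ω] {μ : Ω → ℝ} (hμ : IsPMF μ) (n : ℕ) :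
    IsPMF (fun ω : Fin n → Ω => ∏ i, μ (ω i)) := by
  constructor
  · intro ω; exact Finset.prod_nonneg fun i _ => hμ.1 (ω i)
  · rw [← Fintype.prod_sum (f := fun _ : Fin n => μ)]
    rw [Finset.prod_congr rfl (fun i _ => hμ.2)]
    simp


/-- The triple of secured subvectors
`(A[H^{(n)}_{V|Z}], T_{(k)}[H^{(n)}_{U_k|VZ}], T_{(k̄)}[H^{(n)}_{U_k̄|V U_k Z}])`
extracted from given realizations of the three polar-transformed layers.
`Ua` plays the role of `U_k` and `Ub` that of `U_k̄`. -/
def secTriple {Ω 𝒵 : Type*} [Fintype Ω] [Fintype 𝒵]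
    (μ : Ω → ℝ) (V Ua Ub : Ω → ZMod 2) (Z : Ω → 𝒵) (β : ℝ) (m : ℕ)
    (a ta tb : Fin (2 ^ m) → ZMod 2) :=
  (restr (highSet μ V Z β m) a,
   restr (highSet μ Ua (fun ω => (V ω, Z ω)) β m) ta,
   restr (highSet μ Ub (fun ω => (V ω, Ua ω, Z ω)) β m) tb)

set_option maxHeartbeats 2000000 in
/-- **Ideal per-block leakage bound.**
`I(A[H_{V|Z}], T_{(k)}[H_{U_k|VZ}], T_{(k̄)}[H_{U_k̄|V U_k Z}] ; Z^n) ≤ 3 n δ_n`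
under the true i.i.d. source distribution, with `n = 2^m`. -/
theorem ideal_per_block_leakage_bound
    {Ω 𝒵 : Type*} [Fintype Ω] [Fintype 𝒵]
    (μ : Ω → ℝ) (hμ : IsPMF μ)
    (V Ua Ub : Ω → ZMod 2) (Z : Ω → 𝒵)
    (β : ℝ) (hβ0 : 0 < β) (hβ1 : β < 1 / 2) (m : ℕ) :
    mutInfo (iid μ (2 ^ m))
        (fun ω => secTriple μ V Ua Ub Z β m
          (polarVec V m ω) (polarVec Ua m ω) (polarVec Ub m ω))
        (fun ω => fun i => Z (ω i)) ≤
      3 * ((2 : ℕ) ^ m : ℝ) * deltaN β (2 ^ m) := by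
  classical
  set n : ℕ := 2 ^ m with hn
  set ν : (Fin n → Ω) → ℝ := iid μ n with hν'
  have hν : IsPMF ν := iid_aux hμ n
  set δ : ℝ := deltaN β n with hδ'
  have hδ0 : 0 ≤ δ := by
    rw [hδ']; unfold deltaN; positivity
  set A1 : Finset (Fin n) := highSet μ V Z β m with hA1'
  set A2 : Finset (Fin n) := highSet μ Ua (fun ω => (V ω, Z ω)) β m with hA2'
  set A3 : Finset (Fin n) := highSet μ Ub (fun ω => (V ω, Ua ω, Z ω)) β m with hA3'
  set S1 : (Fin n → Ω) → ({j // j ∈ A1} → ZMod 2) :=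
    fun ω => restr A1 (polarVec V m ω) with hS1'
  set S2 : (Fin n → Ω) → ({j // j ∈ A2} → ZMod 2) :=
    fun ω => restr A2 (polarVec Ua m ω) with hS2'
  set S3 : (Fin n → Ω) → ({j // j ∈ A3} → ZMod 2) :=
    fun ω => restr A3 (polarVec Ub m ω) with hS3'
  set Zn : (Fin n → Ω) → (Fin n → 𝒵) := fun ω i => Z (ω i) with hZn'
  -- rewrite the goal
  show mutInfo ν (fun ω => (S1 ω, (S2 ω, S3 ω))) Zn ≤ 3 * ((2:ℕ) : ℝ) ^ m * δ
  -- membership facts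
  have hmem1 : ∀ j ∈ A1, 1 - δ ≤ condEnt ν (fun ω => polarVec V m ω j)
      (fun ω => ((fun i : Fin j.1 => polarVec V m ω (Fin.castLE j.2.le i)),
        (fun ω' : Fin n → Ω => fun i => Z (ω' i)) ω)) :=
    fun j hj => by have h := mem_cfilter.mp hj; exact h
  have hmem2 : ∀ j ∈ A2, 1 - δ ≤ condEnt ν (fun ω => polarVec Ua m ω j)
      (fun ω => ((fun i : Fin j.1 => polarVec Ua m ω (Fin.castLE j.2.le i)),
        (fun ω' : Fin n → Ω => fun i => (V (ω' i), Z (ω' i))) ω)) :=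
    fun j hj => by have h := mem_cfilter.mp hj; exact h
  have hmem3 : ∀ j ∈ A3, 1 - δ ≤ condEnt ν (fun ω => polarVec Ub m ω j)
      (fun ω => ((fun i : Fin j.1 => polarVec Ub m ω (Fin.castLE j.2.le i)),
        (fun ω' : Fin n → Ω => fun i => (V (ω' i), Ua (ω' i), Z (ω' i))) ω)) :=
    fun j hj => by have h := mem_cfilter.mp hj; exact h
  -- block bounds
  have b1 : ent ν S1 - condEnt ν S1 Zn ≤ (A1.card : ℝ) * δ := by
    exact term_bound hν (polarVec V m) (fun ω' => fun i => Z (ω' i)) A1 δ hmem1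
      Zn id (fun ω => rfl)
  have b2 : ent ν S2 - condEnt ν S2 (fun ω => (S1 ω, Zn ω)) ≤ (A2.card : ℝ) * δ := by
    exact term_bound hν (polarVec Ua m) (fun ω' => fun i => (V (ω' i), Z (ω' i))) A2 δ hmem2
      (fun ω => (S1 ω, Zn ω))
      (fun c => (restr A1 (Matrix.vecMul (fun i => (c i).1) (polarG m)), fun i => (c i).2))
      (fun ω => rfl)
  have b3 : ent ν S3 - condEnt ν S3 (fun ω => ((S2 ω, S1 ω), Zn ω)) ≤ (A3.card : ℝ) * δ := by
    exact term_bound hν (polarVec Ub m)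
      (fun ω' => fun i => (V (ω' i), Ua (ω' i), Z (ω' i))) A3 δ hmem3
      (fun ω => ((S2 ω, S1 ω), Zn ω))
      (fun c => ((restr A2 (Matrix.vecMul (fun i => (c i).2.1) (polarG m)),
        restr A1 (Matrix.vecMul (fun i => (c i).1) (polarG m))), fun i => (c i).2.2))
      (fun ω => rfl)
  -- reorder and chain
  have reord1 : ent ν (fun ω => (S1 ω, (S2 ω, S3 ω)))
      = ent ν (fun ω => (S3 ω, (S2 ω, S1 ω))) :=
    ent_congr hν (fun v => (v.2.2, (v.2.1, v.1))) (fun v => (v.2.2, (v.2.1, v.1)))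
      (fun ω => rfl) (fun ω => rfl)
  have reord2 : condEnt ν (fun ω => (S1 ω, (S2 ω, S3 ω))) Zn
      = condEnt ν (fun ω => (S3 ω, (S2 ω, S1 ω))) Zn :=
    condEnt_congr_left hν Zn (fun v => (v.2.2, (v.2.1, v.1))) (fun v => (v.2.2, (v.2.1, v.1)))
      (fun ω => rfl) (fun ω => rfl)
  have chain1 : ent ν (fun ω => (S3 ω, (S2 ω, S1 ω)))
      = ent ν (fun ω => (S2 ω, S1 ω)) + condEnt ν S3 (fun ω => (S2 ω, S1 ω)) :=
    ent_chain S3 (fun ω => (S2 ω, S1 ω))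
  have chain2 : ent ν (fun ω => (S2 ω, S1 ω)) = ent ν S1 + condEnt ν S2 S1 :=
    ent_chain S2 S1
  have chain3 : condEnt ν (fun ω => (S3 ω, (S2 ω, S1 ω))) Zn
      = condEnt ν (fun ω => (S2 ω, S1 ω)) Zn
        + condEnt ν S3 (fun ω => ((S2 ω, S1 ω), Zn ω)) :=
    condEnt_chain hν S3 (fun ω => (S2 ω, S1 ω)) Zn
  have chain4 : condEnt ν (fun ω => (S2 ω, S1 ω)) Zn
      = condEnt ν S1 Zn + condEnt ν S2 (fun ω => (S1 ω, Zn ω)) :=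
    condEnt_chain hν S2 S1 Zn
  have hmi : mutInfo ν (fun ω => (S1 ω, (S2 ω, S3 ω))) Zn
      = ent ν (fun ω => (S1 ω, (S2 ω, S3 ω)))
        - condEnt ν (fun ω => (S1 ω, (S2 ω, S3 ω))) Zn := by
    unfold mutInfo condEnt; ring
  have hc2 : condEnt ν S2 S1 ≤ ent ν S2 := condEnt_le_ent hν S2 S1
  have hc3 : condEnt ν S3 (fun ω => (S2 ω, S1 ω)) ≤ ent ν S3 :=
    condEnt_le_ent hν S3 (fun ω => (S2 ω, S1 ω))
  -- cardinality bounds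
  have hcard1 : (A1.card : ℝ) ≤ ((2:ℕ) : ℝ) ^ m := by
    have h := Finset.card_le_univ A1
    rw [Fintype.card_fin] at h
    have h2 : ((A1.card : ℕ) : ℝ) ≤ (n : ℝ) := by exact_mod_cast h
    have h3 : (n : ℝ) = ((2:ℕ) : ℝ) ^ m := by rw [hn]; push_cast; ring
    linarith
  have hcard2 : (A2.card : ℝ) ≤ ((2:ℕ) : ℝ) ^ m := by
    have h := Finset.card_le_univ A2
    rw [Fintype.card_fin] at h
    have h2 : ((A2.card : ℕ) : ℝ) ≤ (n : ℝ) := by exact_mod_cast h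
    have h3 : (n : ℝ) = ((2:ℕ) : ℝ) ^ m := by rw [hn]; push_cast; ring
    linarith
  have hcard3 : (A3.card : ℝ) ≤ ((2:ℕ) : ℝ) ^ m := by
    have h := Finset.card_le_univ A3
    rw [Fintype.card_fin] at h
    have h2 : ((A3.card : ℕ) : ℝ) ≤ (n : ℝ) := by exact_mod_cast h
    have h3 : (n : ℝ) = ((2:ℕ) : ℝ) ^ m := by rw [hn]; push_cast; ring
    linarith
  linarith [hmi, reord1, reord2, chain1, chain2, chain3, chain4, b1, b2, b3, hc2, hc3,
    mul_le_mul_of_nonneg_right hcard1 hδ0, mul_le_mul_of_nonneg_right hcard2 hδ0,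
    mul_le_mul_of_nonneg_right hcard3 hδ0]

end WTpaper
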